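/- Class balance of the balanced isotropic DGUM: for every σ > 0 and every index k with 1 ≤ k ≤ P+1, the centered isotropic Gaussian measure μ_σ on ℝ^P assigns mass μ_σ(B_k) = 1/(P+1) to the Voronoï cell of each vertex of the unit P-simplex; equivalently, if Z is a centered isotropic Gaussian vector in ℝ^P, the probability that v_k is a nearest simplex vertex to Z equals 1/(P+1) for every k. -/

import Mathlib

open scoped BigOperators

/-- The all-ones vector in `ℝ^P`. -/
noncomputable def onesVec (P : ℕ) : EuclideanSpace ℝ (Fin P) :=
  (WithLp.equiv 2 (Fin P → ℝ)).symm fun _ => 1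

/-- The vertices of the unit `P`-simplex: for `j < P`,
`v_j = √((P+1)/P) • e_j − ((√(P+1) − 1)/(P√P)) • 𝟏`, and `v_{P+1} = −(1/√P) • 𝟏`. -/
noncomputable def simplexVertex (P : ℕ) (j : Fin (P + 1)) : EuclideanSpace ℝ (Fin P) :=
  if h : (j : ℕ) < P then
    Real.sqrt ((P + 1) / P) • EuclideanSpace.single ⟨(j : ℕ), h⟩ (1 : ℝ)
      - ((Real.sqrt (P + 1) - 1) / (P * Real.sqrt P)) • onesVec P
  else
    (-1 / Real.sqrt P) • onesVec P

/-- The Voronoï cell of the `k`-th simplex vertex: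
`B_k = {z : ‖z − v_k‖ ≤ ‖z − v_i‖ for all i}`. -/
def voronoiCell (P : ℕ) (k : Fin (P + 1)) : Set (EuclideanSpace ℝ (Fin P)) :=
  {z | ∀ i : Fin (P + 1), ‖z - simplexVertex P k‖ ≤ ‖z - simplexVertex P i‖}


/-- The centered isotropic Gaussian measure on `ℝ^P` with variance `σ²`, given by the density
`(2πσ²)^{−P/2} exp(−‖z‖²/(2σ²))` with respect to Lebesgue measure. -/
noncomputable def gaussianMeasure (P : ℕ) (σ : ℝ) :
    MeasureTheory.Measure (EuclideanSpace ℝ (Fin P)) :=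
  MeasureTheory.volume.withDensity fun z =>
    ENNReal.ofReal ((2 * Real.pi * σ ^ 2) ^ (-(P : ℝ) / 2) * Real.exp (-‖z‖ ^ 2 / (2 * σ ^ 2)))

/-!
The simplex vertices `v₀, …, v_P` are unit vectors with `⟪vⱼ, vₘ⟫ = -1/P` for `j ≠ m`. Hence
the reflection in the perpendicular bisector of `vₖ` and `vᵢ` swaps these two vertices and fixes
all others, so it maps the Voronoï cell of `vᵢ` onto that of `vₖ`. The Gaussian density is radial,
so `μ_σ` is invariant under this reflection and all cells have the same mass. Two cells meet only
inside a hyperplane, which is Lebesgue-null, so the `P + 1` cells form an a.e. partition of `ℝ^P`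
and each has mass `1/(P+1)`.
-/

open scoped RealInnerProductSpace
open MeasureTheory Set Function

section Voronoi

variable {E ι : Type*} [NormedAddCommGroup E]

def voronoiRegion (v : ι → E) (k : ι) : Set E :=
  {z | ∀ i, ‖z - v k‖ ≤ ‖z - v i‖}

theorem isClosed_voronoiRegion (v : ι → E) (k : ι) : IsClosed (voronoiRegion v k) := by
  simp only [voronoiRegion, ofPred_forall]
  exact isClosed_iInter fun i => isClosed_le (by fun_prop) (by fun_prop)

theorem iUnion_voronoiRegion [Finite ι] [Nonempty ι] (v : ι → E) :
    ⋃ k, voronoiRegion v k = univ :=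
  eq_univ_of_forall fun z => mem_iUnion.2 (Finite.exists_min fun i => ‖z - v i‖)

theorem preimage_voronoiRegion {f : E → E} (hf : Isometry f) {v : ι → E} {e : ι ≃ ι}
    (hfv : ∀ m, f (v m) = v (e m)) (k : ι) :
    f ⁻¹' voronoiRegion v (e k) = voronoiRegion v k := by
  have hdist : ∀ z m, ‖f z - v (e m)‖ = ‖z - v m‖ := fun z m => by
    rw [← hfv, ← dist_eq_norm, ← dist_eq_norm, hf.dist_eq]
  ext z
  simp only [voronoiRegion, mem_preimage, mem_ofPred_eq]
  rw [← e.forall_congr_right]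
  simp only [hdist]

variable [InnerProductSpace ℝ E]

theorem voronoiRegion_inter_subset_orthogonal {v : ι → E} {k i : ι} (hki : ‖v k‖ = ‖v i‖) :
    voronoiRegion v k ∩ voronoiRegion v i ⊆ (ℝ ∙ (v k - v i))ᗮ := by
  rintro z ⟨hzk, hzi⟩
  have hsq : ‖z - v k‖ ^ 2 = ‖z - v i‖ ^ 2 := by rw [le_antisymm (hzk i) (hzi k)]
  rw [norm_sub_sq_real, norm_sub_sq_real, hki] at hsq
  rw [SetLike.mem_coe, Submodule.mem_orthogonal_singleton_iff_inner_right, inner_sub_left,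
    real_inner_comm, real_inner_comm z]
  linarith

end Voronoi

theorem MeasureTheory.measure_eq_inv_card_of_iUnion_eq_univ {α ι : Type*} [MeasurableSpace α]
    [Fintype ι] {μ : Measure α} [IsProbabilityMeasure μ] {s : ι → Set α}
    (hs : ∀ i, NullMeasurableSet (s i) μ) (hd : Pairwise (AEDisjoint μ on s))
    (hU : ⋃ i, s i = univ) (heq : ∀ i j, μ (s i) = μ (s j)) (k : ι) :
    μ (s k) = (Fintype.card ι : ENNReal)⁻¹ := by
  have hsum : ∑ i, μ (s i) = 1 := by
    simpa [hU, tsum_fintype] using (measure_iUnion₀ hd hs).symm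
  simp only [heq _ k, Finset.sum_const, Finset.card_univ, nsmul_eq_mul] at hsum
  exact ENNReal.eq_inv_of_mul_eq_one_left (by rwa [mul_comm])

section Equiangular

variable {E ι : Type*} [NormedAddCommGroup E] [InnerProductSpace ℝ E] [DecidableEq ι]
  {v : ι → E} {a b : ℝ}

theorem norm_eq_of_inner_eq_ite (hv : ∀ j m, ⟪v j, v m⟫ = if j = m then a else b) (k i : ι) :
    ‖v k‖ = ‖v i‖ := by
  rw [← sq_eq_sq₀ (norm_nonneg _) (norm_nonneg _), ← real_inner_self_eq_norm_sq,
    ← real_inner_self_eq_norm_sq, hv, hv, if_pos rfl, if_pos rfl]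

theorem injective_of_inner_eq_ite (hv : ∀ j m, ⟪v j, v m⟫ = if j = m then a else b)
    (hab : a ≠ b) : Injective v := by
  intro j m hjm
  by_contra hne
  have hjm' := hv j m
  rw [if_neg hne, ← hjm, hv, if_pos rfl] at hjm'
  exact hab hjm'

theorem reflection_apply_eq_swap (hv : ∀ j m, ⟪v j, v m⟫ = if j = m then a else b)
    (k i m : ι) : (ℝ ∙ (v k - v i))ᗮ.reflection (v m) = v (Equiv.swap k i m) := by
  have hki : (ℝ ∙ (v k - v i))ᗮ.reflection (v k) = v i :=
    Submodule.reflection_sub (norm_eq_of_inner_eq_ite hv k i)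
  rcases eq_or_ne m k with rfl | hmk
  · rw [Equiv.swap_apply_left, hki]
  rcases eq_or_ne m i with rfl | hmi
  · rw [Equiv.swap_apply_right]
    exact (congrArg _ hki).symm.trans (Submodule.reflection_reflection _ _)
  rw [Equiv.swap_apply_of_ne_of_ne hmk hmi]
  refine Submodule.reflection_mem_subspace_eq_self ?_
  rw [Submodule.mem_orthogonal_singleton_iff_inner_right, inner_sub_left, hv, hv,
    if_neg hmk.symm, if_neg hmi.symm, sub_self]

variable [MeasurableSpace E] [BorelSpace E] {μ : Measure E}

theorem measure_voronoiRegion_eq_of_inner_eq_ite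
    (hμ : ∀ R : E ≃ₗᵢ[ℝ] E, MeasurePreserving R μ μ)
    (hv : ∀ j m, ⟪v j, v m⟫ = if j = m then a else b) (k i : ι) :
    μ (voronoiRegion v k) = μ (voronoiRegion v i) := by
  let R := (ℝ ∙ (v k - v i))ᗮ.reflection
  have hR : R ⁻¹' voronoiRegion v i = voronoiRegion v k := by
    simpa using preimage_voronoiRegion R.isometry (e := Equiv.swap k i)
      (reflection_apply_eq_swap hv k i) k
  rw [← hR, (hμ R).measure_preimage (isClosed_voronoiRegion v i).nullMeasurableSet]

theorem measure_inter_voronoiRegion_eq_zero [FiniteDimensional ℝ E] (ν : Measure E)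
    [ν.IsAddHaarMeasure] (hμν : μ ≪ ν) (hv : ∀ j m, ⟪v j, v m⟫ = if j = m then a else b)
    (hab : a ≠ b) {k i : ι} (hki : k ≠ i) :
    μ (voronoiRegion v k ∩ voronoiRegion v i) = 0 := by
  have hne : (ℝ ∙ (v k - v i))ᗮ ≠ ⊤ := by
    rw [Ne, Submodule.orthogonal_eq_top_iff, Submodule.span_singleton_eq_bot, sub_eq_zero]
    exact (injective_of_inner_eq_ite hv hab).ne hki
  exact measure_mono_null
    (voronoiRegion_inter_subset_orthogonal (norm_eq_of_inner_eq_ite hv k i))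
    (hμν (Measure.addHaar_submodule ν _ hne))

theorem measure_voronoiRegion_eq_inv_card [FiniteDimensional ℝ E] [Fintype ι] (μ ν : Measure E)
    [IsProbabilityMeasure μ] [ν.IsAddHaarMeasure] (hμν : μ ≪ ν)
    (hμ : ∀ R : E ≃ₗᵢ[ℝ] E, MeasurePreserving R μ μ)
    (hv : ∀ j m, ⟪v j, v m⟫ = if j = m then a else b) (hab : a ≠ b) (k : ι) :
    μ (voronoiRegion v k) = (Fintype.card ι : ENNReal)⁻¹ :=
  have : Nonempty ι := ⟨k⟩
  measure_eq_inv_card_of_iUnion_eq_univ (fun i => (isClosed_voronoiRegion v i).nullMeasurableSet)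
    (fun _ _ hki => measure_inter_voronoiRegion_eq_zero ν hμν hv hab hki)
    (iUnion_voronoiRegion v) (measure_voronoiRegion_eq_of_inner_eq_ite hμ hv) k

end Equiangular

theorem MeasureTheory.MeasurePreserving.withDensity_of_comp_eq {α : Type*} [MeasurableSpace α]
    {μ : Measure α} {f : α → α} (hf : MeasurePreserving f μ μ) (hfe : MeasurableEmbedding f)
    {g : α → ENNReal} (hg : ∀ x, g (f x) = g x) :
    MeasurePreserving f (μ.withDensity g) (μ.withDensity g) := by
  refine ⟨hf.measurable, Measure.ext fun s hs => ?_⟩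
  rw [Measure.map_apply hf.measurable hs, withDensity_apply _ (hf.measurable hs),
    withDensity_apply _ hs, ← hf.setLIntegral_comp_preimage_emb hfe g s]
  simp only [hg]

section Gaussian

variable (P : ℕ)

theorem integral_gaussianDensity {σ : ℝ} (hσ : σ ≠ 0) :
    ∫ z : EuclideanSpace ℝ (Fin P),
      (2 * Real.pi * σ ^ 2) ^ (-(P : ℝ) / 2) * Real.exp (-‖z‖ ^ 2 / (2 * σ ^ 2)) = 1 := by
  have hvar : 0 < 2 * Real.pi * σ ^ 2 := by positivity
  have hπ : Real.pi / (2 * σ ^ 2)⁻¹ = 2 * Real.pi * σ ^ 2 := by rw [div_inv_eq_mul]; ring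
  have hexp : ∀ z : EuclideanSpace ℝ (Fin P),
      -‖z‖ ^ 2 / (2 * σ ^ 2) = -(2 * σ ^ 2)⁻¹ * ‖z‖ ^ 2 := fun z => by ring
  simp_rw [hexp]
  rw [integral_const_mul, GaussianFourier.integral_rexp_neg_mul_sq_norm (by positivity),
    finrank_euclideanSpace_fin, hπ, ← Real.rpow_add hvar, neg_div, neg_add_cancel,
    Real.rpow_zero]

theorem isProbabilityMeasure_gaussianMeasure {σ : ℝ} (hσ : σ ≠ 0) :
    IsProbabilityMeasure (gaussianMeasure P σ) := by
  constructor
  rw [gaussianMeasure, withDensity_apply _ MeasurableSet.univ, Measure.restrict_univ,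
    ← ofReal_integral_eq_lintegral_ofReal
      (.of_integral_ne_zero (by rw [integral_gaussianDensity P hσ]; exact one_ne_zero))
      (.of_forall fun z => by positivity),
    integral_gaussianDensity P hσ, ENNReal.ofReal_one]

theorem measurePreserving_gaussianMeasure (σ : ℝ)
    (R : EuclideanSpace ℝ (Fin P) ≃ₗᵢ[ℝ] EuclideanSpace ℝ (Fin P)) :
    MeasurePreserving R (gaussianMeasure P σ) (gaussianMeasure P σ) :=
  R.measurePreserving.withDensity_of_comp_eq R.toHomeomorph.measurableEmbedding
    fun z => by rw [R.norm_map]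

end Gaussian

section Simplex

variable {P : ℕ}

theorem voronoiCell_eq_voronoiRegion (k : Fin (P + 1)) :
    voronoiCell P k = voronoiRegion (simplexVertex P) k :=
  rfl

theorem simplexVertex_castSucc (j : Fin P) :
    simplexVertex P j.castSucc = Real.sqrt ((P + 1) / P) • EuclideanSpace.single j 1
      - ((Real.sqrt (P + 1) - 1) / (P * Real.sqrt P)) • onesVec P :=
  dif_pos j.isLt

theorem simplexVertex_last : simplexVertex P (Fin.last P) = (-1 / Real.sqrt P) • onesVec P :=
  dif_neg (lt_irrefl P)

@[simp]
theorem onesVec_apply (i : Fin P) : onesVec P i = 1 := rfl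

theorem inner_onesVec_single (i : Fin P) : ⟪onesVec P, EuclideanSpace.single i 1⟫ = 1 := by
  simp [EuclideanSpace.inner_single_right]

theorem inner_onesVec_self : ⟪onesVec P, onesVec P⟫ = P := by
  simp only [PiLp.inner_apply, onesVec_apply]
  simp

theorem inner_simplexVertex (hP : 1 ≤ P) (j m : Fin (P + 1)) :
    ⟪simplexVertex P j, simplexVertex P m⟫ = if j = m then 1 else -(P : ℝ)⁻¹ := by
  have hP0 : (0 : ℝ) < P := by exact_mod_cast hP
  have hr : Real.sqrt P ^ 2 = P := Real.sq_sqrt hP0.le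
  have hs : Real.sqrt (P + 1) ^ 2 = P + 1 := Real.sq_sqrt (by positivity)
  have hdiv : Real.sqrt ((P + 1) / P) = Real.sqrt (P + 1) / Real.sqrt P :=
    Real.sqrt_div' _ hP0.le
  induction j using Fin.lastCases <;> induction m using Fin.lastCases <;>
    simp only [simplexVertex_castSucc, simplexVertex_last, inner_sub_left, inner_sub_right,
      real_inner_smul_left, real_inner_smul_right, inner_onesVec_single, inner_onesVec_self,
      real_inner_comm (onesVec P), EuclideanSpace.inner_single_left, PiLp.single_apply,
      map_one, one_mul, hdiv, Fin.castSucc_inj, Fin.castSucc_ne_last,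
      (Fin.castSucc_ne_last _).symm, if_true, if_false]
  case last.last => field_simp; rw [hr]
  case last.cast | cast.last => field_simp; linear_combination hr
  case cast.cast j m =>
    split_ifs
    · field_simp; linear_combination (P - 1 : ℝ) * hs - P * hr
    · field_simp; linear_combination hr - hs

end Simplex

/-- Class balance of the balanced isotropic DGUM: the centered isotropic Gaussian measure
assigns mass `1/(P+1)` to the Voronoï cell of each vertex of the unit `P`-simplex, i.e. the
probability that `v_k` is a nearest simplex vertex to a centered isotropic Gaussian vector
equals `1/(P+1)` for every `k`. -/
theorem gaussianMeasure_voronoiCell_uniform (P : ℕ) (hP : 1 ≤ P) (σ : ℝ) (hσ : 0 < σ)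
    (k : Fin (P + 1)) :
    gaussianMeasure P σ (voronoiCell P k) = 1 / (P + 1 : ENNReal) := by
  have := isProbabilityMeasure_gaussianMeasure P hσ.ne'
  have hab : (1 : ℝ) ≠ -(P : ℝ)⁻¹ := by
    have : (0 : ℝ) < P := by exact_mod_cast hP
    linarith [inv_pos.2 this]
  rw [voronoiCell_eq_voronoiRegion, measure_voronoiRegion_eq_inv_card (gaussianMeasure P σ) volume
    (withDensity_absolutelyContinuous _ _) (measurePreserving_gaussianMeasure P σ)
    (inner_simplexVertex hP) hab k, Fintype.card_fin, one_div]
  norm_cast
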